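/- In A(α,β,γ), with e := xz − q²β/(q²−1) and f := yz + γ/(q²−1), for every positive integer a one has f e^a = q^{2a} e^a f − ((q^{-2a}−1)/(q^{-2}−1)) α z² e^{a−1} + (q²βγ(q^{2a}−1)/(q²−1)²) e^{a−1}. -/

import Mathlib

/-!
Conjugation by `z` rescales `e` (`z e = q² e z`, so `e z² = q⁻⁴ z² e`), and the constant shifts in
`e` and `f` are chosen so that `f e = q² e f - α z² + q²βγ/(q²-1)`. Moving `f` through `eᵃ` one
factor at a time, the `i`-th factor contributes
`q^{2i} eⁱ (-α z² + q²βγ/(q²-1)) e^{a-1-i} = -q^{-2i} α z² e^{a-1} + q^{2i} q²βγ/(q²-1) e^{a-1}`,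
and the two geometric series give the coefficients.
-/

noncomputable section

open FreeAlgebra

/-- The defining relations of the 3-cyclic quantum Weyl algebra `A(α,β,γ)`:
`xy = q²yx + α`, `xz = q⁻²zx + β`, `yz = q²zy + γ`. -/
inductive CQWRel (K : Type) [Field K] (q α β γ : K) :
    FreeAlgebra K (Fin 3) → FreeAlgebra K (Fin 3) → Prop
  | xy : CQWRel K q α β γ (ι K (0 : Fin 3) * ι K 1)
      (q ^ 2 • (ι K (1 : Fin 3) * ι K 0) + algebraMap K _ α)
  | xz : CQWRel K q α β γ (ι K (0 : Fin 3) * ι K 2)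
      (q⁻¹ ^ 2 • (ι K (2 : Fin 3) * ι K 0) + algebraMap K _ β)
  | yz : CQWRel K q α β γ (ι K (1 : Fin 3) * ι K 2)
      (q ^ 2 • (ι K (2 : Fin 3) * ι K 1) + algebraMap K _ γ)

/-- The 3-cyclic quantum Weyl algebra `A(α,β,γ)`. -/
abbrev CQW (K : Type) [Field K] (q α β γ : K) := RingQuot (CQWRel K q α β γ)

variable {K : Type} [Field K]

/-- The generator `x` of `A(α,β,γ)`. -/
def Xg (q α β γ : K) : CQW K q α β γ := RingQuot.mkAlgHom K (CQWRel K q α β γ) (ι K 0)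

/-- The generator `y` of `A(α,β,γ)`. -/
def Yg (q α β γ : K) : CQW K q α β γ := RingQuot.mkAlgHom K (CQWRel K q α β γ) (ι K 1)

/-- The generator `z` of `A(α,β,γ)`. -/
def Zg (q α β γ : K) : CQW K q α β γ := RingQuot.mkAlgHom K (CQWRel K q α β γ) (ι K 2)

/-- The element `e = xz - q²β/(q²-1)` of `A(α,β,γ)`. -/
def eElt (q α β γ : K) : CQW K q α β γ :=
  Xg q α β γ * Zg q α β γ - algebraMap K (CQW K q α β γ) (q ^ 2 * β / (q ^ 2 - 1))

/-- The element `f = yz + γ/(q²-1)` of `A(α,β,γ)`. -/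
def fElt (q α β γ : K) : CQW K q α β γ :=
  Yg q α β γ * Zg q α β γ + algebraMap K (CQW K q α β γ) (γ / (q ^ 2 - 1))

section
variable {R A : Type*} [CommSemiring R] [Semiring A] [Algebra R A]
open Finset

theorem pow_mul_eq_smul_mul_pow {e w : A} {s : R} (h : e * w = s • (w * e)) (k : ℕ) :
    e ^ k * w = s ^ k • (w * e ^ k) := by
  induction k with
  | zero => simp
  | succ k ih =>
    rw [pow_succ', mul_assoc, ih, mul_smul_comm, ← mul_assoc, h, smul_mul_assoc, smul_smul,
      mul_assoc, ← pow_succ, pow_succ]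

theorem mul_pow_eq_of_mul_eq {e f w : A} {p s u c : R}
    (hfe : f * e = p • (e * f) + u • w + c • 1) (hew : e * w = s • (w * e)) (n : ℕ) :
    f * e ^ n = p ^ n • (e ^ n * f) + ((∑ i ∈ range n, (p * s) ^ i) * u) • (w * e ^ (n - 1)) +
      (c * ∑ i ∈ range n, p ^ i) • e ^ (n - 1) := by
  induction n with
  | zero => simp
  | succ n ih =>
    obtain _ | n := n
    · simpa using hfe
    · have hew' : e ^ (n + 1) * w = s ^ (n + 1) • (w * e ^ (n + 1)) :=
        pow_mul_eq_smul_mul_pow hew _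
      calc f * e ^ (n + 2)
        _ = p ^ (n + 1) • (e ^ (n + 1) * (f * e)) +
            ((∑ i ∈ range (n + 1), (p * s) ^ i) * u) • (w * e ^ (n + 1)) +
            (c * ∑ i ∈ range (n + 1), p ^ i) • e ^ (n + 1) := by
          rw [pow_succ, ← mul_assoc, ih]
          simp only [add_mul, smul_mul_assoc, mul_assoc, add_tsub_cancel_right, ← pow_succ]
        _ = _ := by
          rw [hfe, mul_add, mul_add, mul_smul_comm, mul_smul_comm, mul_smul_comm, hew', mul_one,
            ← mul_assoc, ← pow_succ, sum_range_succ _ (n + 1), sum_range_succ _ (n + 1),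
            add_tsub_cancel_right]
          module

end

theorem mul_eq_inv_smul_of_mul_eq {R A : Type*} [Field R] [Ring A] [Algebra R A] {a b : A}
    {t d : R} (ht : t ≠ 0) (h : a * b = t • (b * a) + algebraMap R A d) :
    b * a = t⁻¹ • (a * b - algebraMap R A d) := by
  rw [h, add_sub_cancel_right, inv_smul_smul₀ ht]

section
variable (q α β γ : K)

local notation "X" => Xg q α β γ
local notation "Y" => Yg q α β γ
local notation "Z" => Zg q α β γ
local notation "E" => eElt q α β γ
local notation "F" => fElt q α β γ

theorem Xg_mul_Yg : X * Y = q ^ 2 • (Y * X) + algebraMap K _ α := by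
  simpa [Xg, Yg] using RingQuot.mkAlgHom_rel K (CQWRel.xy (q := q) (α := α) (β := β) (γ := γ))

theorem Xg_mul_Zg : X * Z = q⁻¹ ^ 2 • (Z * X) + algebraMap K _ β := by
  simpa [Xg, Zg] using RingQuot.mkAlgHom_rel K (CQWRel.xz (q := q) (α := α) (β := β) (γ := γ))

theorem Yg_mul_Zg : Y * Z = q ^ 2 • (Z * Y) + algebraMap K _ γ := by
  simpa [Yg, Zg] using RingQuot.mkAlgHom_rel K (CQWRel.yz (q := q) (α := α) (β := β) (γ := γ))

variable {q}

theorem Yg_mul_Xg (hq : q ≠ 0) : Y * X = q⁻¹ ^ 2 • (X * Y - algebraMap K _ α) := by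
  simpa using mul_eq_inv_smul_of_mul_eq (pow_ne_zero 2 hq) (Xg_mul_Yg q α β γ)

theorem Zg_mul_Xg (hq : q ≠ 0) : Z * X = q ^ 2 • (X * Z - algebraMap K _ β) := by
  simpa using mul_eq_inv_smul_of_mul_eq (pow_ne_zero 2 (inv_ne_zero hq)) (Xg_mul_Zg q α β γ)

theorem Zg_mul_Yg (hq : q ≠ 0) : Z * Y = q⁻¹ ^ 2 • (Y * Z - algebraMap K _ γ) := by
  simpa using mul_eq_inv_smul_of_mul_eq (pow_ne_zero 2 hq) (Yg_mul_Zg q α β γ)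

theorem Zg_mul_eElt (hq : q ≠ 0) (hq2 : q ^ 2 ≠ 1) : Z * E = q ^ 2 • (E * Z) := by
  have hb : q ^ 2 * β / (q ^ 2 - 1) * (q ^ 2 - 1) = q ^ 2 * β :=
    div_mul_cancel₀ _ (sub_ne_zero.mpr hq2)
  rw [eElt, mul_sub, sub_mul, ← mul_assoc, Zg_mul_Xg α β γ hq, ← Algebra.commutes]
  simp only [smul_sub, sub_mul, smul_mul_assoc, Algebra.algebraMap_eq_smul_one, one_mul]
  match_scalars
  · ring
  · linear_combination hb

theorem Yg_Zg_mul_Xg_Zg (hq : q ≠ 0) :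
    Y * Z * (X * Z) = X * Y * Z ^ 2 - α • Z ^ 2 - (q ^ 2 * β) • (Y * Z) := by
  calc Y * Z * (X * Z) = Y * (Z * X) * Z := by simp only [mul_assoc]
    _ = q ^ 2 • (Y * X) * Z ^ 2 - (q ^ 2 * β) • (Y * Z) := by
      rw [Zg_mul_Xg α β γ hq]
      simp only [smul_sub, mul_sub, sub_mul, mul_smul_comm, smul_mul_assoc,
        Algebra.algebraMap_eq_smul_one, mul_one, mul_assoc, sq, smul_smul]
    _ = _ := by
      rw [Yg_mul_Xg α β γ hq, smul_smul, ← mul_pow, mul_inv_cancel₀ hq, one_pow, one_smul,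
        sub_mul, Algebra.algebraMap_eq_smul_one, smul_mul_assoc, one_mul]

theorem Xg_Zg_mul_Yg_Zg (hq : q ≠ 0) :
    X * Z * (Y * Z) = q⁻¹ ^ 2 • (X * Y * Z ^ 2 - γ • (X * Z)) := by
  calc X * Z * (Y * Z) = X * (Z * Y) * Z := by simp only [mul_assoc]
    _ = _ := by
      rw [Zg_mul_Yg α β γ hq]
      simp only [mul_sub, sub_mul, mul_smul_comm, smul_mul_assoc, Algebra.algebraMap_eq_smul_one,
        mul_one, mul_assoc, sq]

theorem fElt_mul_eElt (hq : q ≠ 0) (hq2 : q ^ 2 ≠ 1) :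
    F * E = q ^ 2 • (E * F) + (-α) • Z ^ 2 + (q ^ 2 * β * γ / (q ^ 2 - 1)) • 1 := by
  simp only [fElt, eElt, mul_add, add_mul, mul_sub, sub_mul, Yg_Zg_mul_Xg_Zg α β γ hq,
    Xg_Zg_mul_Yg_Zg α β γ hq]
  simp only [Algebra.algebraMap_eq_smul_one, mul_smul_comm, smul_mul_assoc, mul_one, one_mul,
    smul_smul]
  match_scalars <;> field_simp [sub_ne_zero.mpr hq2] <;> ring

theorem eElt_mul_Zg_sq (hq : q ≠ 0) (hq2 : q ^ 2 ≠ 1) :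
    E * Z ^ 2 = ((q ^ 2) ^ 2)⁻¹ • (Z ^ 2 * E) := by
  rw [pow_mul_eq_smul_mul_pow (Zg_mul_eElt α β γ hq hq2) 2, inv_smul_smul₀ (by positivity)]

end

theorem stmt7_general (q α β γ : K) (hq : q ≠ 0) (hq2 : q ^ 2 ≠ 1) (a : ℕ) :
    fElt q α β γ * eElt q α β γ ^ a =
      q ^ (2 * a) • (eElt q α β γ ^ a * fElt q α β γ) -
        ((q⁻¹ ^ (2 * a) - 1) / (q⁻¹ ^ 2 - 1) * α) •
          (Zg q α β γ ^ 2 * eElt q α β γ ^ (a - 1)) +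
        (q ^ 2 * β * γ * (q ^ (2 * a) - 1) / (q ^ 2 - 1) ^ 2) • eElt q α β γ ^ (a - 1) := by
  have hqi : q⁻¹ ^ 2 ≠ 1 := by rwa [inv_pow, inv_ne_one]
  have hps : q ^ 2 * ((q ^ 2) ^ 2)⁻¹ = q⁻¹ ^ 2 := by field_simp
  rw [mul_pow_eq_of_mul_eq (fElt_mul_eElt α β γ hq hq2) (eElt_mul_Zg_sq α β γ hq hq2) a, hps,
    geom_sum_eq hqi, geom_sum_eq hq2, ← pow_mul, ← pow_mul, div_mul_div_comm, ← sq]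
  module

/-- In `A(α,β,γ)`:
`f eᵃ = q^{2a} eᵃ f - ((q^{-2a}-1)/(q^{-2}-1)) α z² e^{a-1} + (q²βγ(q^{2a}-1)/(q²-1)²) e^{a-1}`
for all `a ≥ 1`. -/
theorem stmt7 (q α β γ : K) (hq : q ≠ 0) (hq2 : q ^ 2 ≠ 1) (a : ℕ) (ha : 0 < a) :
    fElt q α β γ * eElt q α β γ ^ a =
      q ^ (2 * a) • (eElt q α β γ ^ a * fElt q α β γ) -
        ((q⁻¹ ^ (2 * a) - 1) / (q⁻¹ ^ 2 - 1) * α) •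
          (Zg q α β γ ^ 2 * eElt q α β γ ^ (a - 1)) +
        (q ^ 2 * β * γ * (q ^ (2 * a) - 1) / (q ^ 2 - 1) ^ 2) • eElt q α β γ ^ (a - 1) :=
  stmt7_general q α β γ hq hq2 a
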